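/- Let $M_B > 0$ and $r_0 > 0$, and define $f(\lambda) = \frac{M_B - \lambda}{\lambda^2 r_0 + \lambda}$ for $\lambda \in (0, M_B]$. Then $f$ is convex on $(0, M_B]$. -/

import Mathlib

/-!
On `(0, M]` the function factors as `((M - λ) / λ) * (r λ + 1)⁻¹`. Both factors are
nonnegative, convex and decreasing there, and a product of nonnegative convex functions that
vary in the same direction is convex.
-/

open Set

lemma convexOn_const_div {M : ℝ} (hM : 0 ≤ M) : ConvexOn ℝ (Ioi 0) fun x => M / x :=
  ((convexOn_zpow (-1)).smul hM).congr fun x _ => by simp [div_eq_mul_inv]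

lemma convexOn_inv_affine (a b : ℝ) :
    ConvexOn ℝ {x | 0 < a * x + b} fun x => (a * x + b)⁻¹ := by
  let g : ℝ →ᵃ[ℝ] ℝ := a • AffineMap.id ℝ ℝ + AffineMap.const ℝ ℝ b
  have hs : {x | 0 < a * x + b} = g ⁻¹' Ioi 0 := by ext; simp [g]
  rw [hs]
  exact ((convexOn_zpow (-1)).comp_affineMap g).congr fun x _ => by simp [g]

theorem stmt_7 (MB r0 : ℝ) (hMB : 0 < MB) (hr0 : 0 < r0) :
    ConvexOn ℝ (Set.Ioc (0 : ℝ) MB)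
      (fun lam : ℝ => (MB - lam) / (lam ^ 2 * r0 + lam)) := by
  have hleft : ConvexOn ℝ (Ioc 0 MB) fun x => (MB - x) / x :=
    (((convexOn_const_div hMB.le).add_const (-1)).subset Ioc_subset_Ioi_self
      (convex_Ioc 0 MB)).congr fun x hx => by
        simp only [Pi.add_apply, div_eq_mul_inv, sub_mul, mul_inv_cancel₀ hx.1.ne']; ring
  have hright : ConvexOn ℝ (Ioc 0 MB) fun x => (r0 * x + 1)⁻¹ :=
    (convexOn_inv_affine r0 1).subset (fun x hx => show 0 < r0 * x + 1 by nlinarith [hx.1])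
      (convex_Ioc 0 MB)
  have hanti_left : AntitoneOn (fun x => (MB - x) / x) (Ioc 0 MB) := fun x hx y _ hxy => by
    rw [div_le_div_iff₀ (hx.1.trans_le hxy) hx.1]
    nlinarith
  have hanti_right : AntitoneOn (fun x => (r0 * x + 1)⁻¹) (Ioc 0 MB) := fun x hx y _ hxy =>
    inv_anti₀ (by nlinarith [hx.1]) (by nlinarith)
  refine (hleft.mul hright (fun x hx => div_nonneg (sub_nonneg.2 hx.2) hx.1.le)
    (fun x hx => by have := hx.1; positivity)
    (hanti_left.monovaryOn hanti_right)).congr fun x hx => ?_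
  have := hx.1
  simp only [Pi.mul_apply]
  field_simp
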